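/- arXiv:2001.08519 — 3 statements merged into one kernel-verified Lean document; each statement's English description precedes it below -/
import Mathlib

section
/- For 1 ≤ p, q ≤ ∞, if a sequence D = (d(j₁,j₂)) over Z × Z^d belongs to ℓ^{p,q} and f belongs to the amalgam space L^{p,q}-script (i.e. ‖ ‖Σ_{j₂}|f(x₁+j₁, x₂+j₂)| ‖_{L^q_{x₂}([0,1]^d)} summed appropriately in j₁ has finite L^p([0,1]) norm), then the semi-convolution f ∗' D = Σ_{j₁,j₂} d(j₁,j₂) f(·−j₁,·−j₂) satisfies ‖f ∗' D‖_{L^{p,q}} ≤ ‖D‖_{ℓ^{p,q}} ‖f‖_{𝓛^{p,q}}. -/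
open MeasureTheory ENNReal Filter

noncomputable section

abbrev Zd (d : ℕ) := Fin d → ℤ
abbrev Rd (d : ℕ) := Fin d → ℝ

/-- coercion of an integer lattice point to `ℝ^d` -/
def zcast {d : ℕ} (j : Zd d) : Rd d := fun i => (j i : ℝ)

/-- the `L^p` "norm" (valued in `ℝ≥0∞`) of an `ℝ≥0∞`-valued function w.r.t. a measure -/
def mnorm (p : ℝ≥0∞) {α : Type*} [MeasurableSpace α] (μ : Measure α) (g : α → ℝ≥0∞) : ℝ≥0∞ :=
  if p = ∞ then essSup g μ else (∫⁻ x, g x ^ p.toReal ∂μ) ^ (1 / p.toReal)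

/-- the `ℓ^p` "norm" of an `ℝ≥0∞`-valued sequence -/
def dnorm (p : ℝ≥0∞) {ι : Type*} (c : ι → ℝ≥0∞) : ℝ≥0∞ :=
  if p = ∞ then ⨆ i, c i else (∑' i, c i ^ p.toReal) ^ (1 / p.toReal)

/-- the mixed Lebesgue norm `‖ ‖f(x₁,·)‖_{L^q(ℝ^d)} ‖_{L^p(ℝ)}` -/
def mixedLpq {d : ℕ} (p q : ℝ≥0∞) (f : ℝ × Rd d → ℂ) : ℝ≥0∞ :=
  mnorm p volume (fun x₁ => mnorm q volume (fun x₂ => (‖f (x₁, x₂)‖₊ : ℝ≥0∞)))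

/-- the mixed sequence norm `ℓ^{p,q}(ℤ × ℤ^d)` -/
def lpq {d : ℕ} (p q : ℝ≥0∞) (D : ℤ × Zd d → ℂ) : ℝ≥0∞ :=
  dnorm p (fun j₁ : ℤ => dnorm q (fun j₂ : Zd d => (‖D (j₁, j₂)‖₊ : ℝ≥0∞)))

def cube (d : ℕ) : Set (Rd d) := Set.Icc 0 1

/-- the amalgam norm `𝓛^{p,q}` -/
def amal {d : ℕ} (p q : ℝ≥0∞) (f : ℝ × Rd d → ℂ) : ℝ≥0∞ :=
  mnorm p (volume.restrict (Set.Icc (0:ℝ) 1)) (fun x₁ =>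
    ∑' j₁ : ℤ, mnorm q (volume.restrict (cube d)) (fun x₂ =>
      ∑' j₂ : Zd d, (‖f (x₁ + (j₁:ℝ), x₂ + zcast j₂)‖₊ : ℝ≥0∞)))

/-- the Wiener amalgam norm `W(L^{1,1})` -/
def wiener {d : ℕ} (f : ℝ × Rd d → ℂ) : ℝ≥0∞ :=
  ∑' j₁ : ℤ, ⨆ x₁ : Set.Icc (0:ℝ) 1, ∑' j₂ : Zd d, ⨆ x₂ : cube d,
    (‖f ((x₁:ℝ) + (j₁:ℝ), (x₂:Rd d) + zcast j₂)‖₊ : ℝ≥0∞)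

/-- the semi-convolution `f ∗' D` -/
def semiConv {d : ℕ} (f : ℝ × Rd d → ℂ) (D : ℤ × Zd d → ℂ) : ℝ × Rd d → ℂ :=
  fun x => ∑' j : ℤ × Zd d, D j * f (x.1 - (j.1:ℝ), x.2 - zcast j.2)

/-! Bound `|f ∗' D|` pointwise by `G = ∑ⱼ |D j| |f (· - j)|`. Tiling `ℝ` and `ℝ^d` by the integer
translates of `[0,1]` and `[0,1]^d` bounds each `L^p` norm by the `L^p` norm over the unit cell of
the `ℓ^p` norm over the translates. At a fixed point `y` of the unit cell, `k ↦ G (y + k)` is the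
discrete convolution of `|D|` with `m ↦ |f (y + m)|`, so Minkowski's inequality and Young's
inequality `ℓ^p * ℓ^1 → ℓ^p`, applied in `k₂`, `y₂` and `k₁` in turn, give the bound. -/

section Norms

variable {α ι : Type*} [MeasurableSpace α] {μ : Measure α} {p : ℝ≥0∞}

lemma rpow_toReal_rpow_one_div (hp0 : p ≠ 0) (hp : p ≠ ∞) (x : ℝ≥0∞) :
    (x ^ p.toReal) ^ (1 / p.toReal) = x := by
  rw [one_div, ENNReal.rpow_rpow_inv (ENNReal.toReal_ne_zero.2 ⟨hp0, hp⟩)]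

lemma mnorm_mono {F G : α → ℝ≥0∞} (h : ∀ x, F x ≤ G x) : mnorm p μ F ≤ mnorm p μ G := by
  unfold mnorm
  split_ifs
  · exact essSup_mono_ae (.of_forall h)
  · gcongr with x
    exact h x

lemma dnorm_mono {F G : ι → ℝ≥0∞} (h : ∀ i, F i ≤ G i) : dnorm p F ≤ dnorm p G := by
  unfold dnorm
  split_ifs
  · exact iSup_mono h
  · gcongr with i
    exact h i

lemma mnorm_const_mul (hp : p ≠ 0) {c : ℝ≥0∞} (hc : c ≠ ∞) (F : α → ℝ≥0∞) :
    mnorm p μ (fun x => c * F x) = c * mnorm p μ F := by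
  unfold mnorm
  split_ifs with hp'
  · exact ENNReal.essSup_const_mul
  · simp_rw [ENNReal.mul_rpow_of_nonneg _ _ ENNReal.toReal_nonneg,
      lintegral_const_mul' _ _ (ENNReal.rpow_ne_top_of_nonneg ENNReal.toReal_nonneg hc),
      ENNReal.mul_rpow_of_nonneg _ _ (by positivity : (0:ℝ) ≤ 1 / p.toReal),
      rpow_toReal_rpow_one_div hp hp']

lemma dnorm_const_mul (hp : p ≠ 0) (c : ℝ≥0∞) (F : ι → ℝ≥0∞) :
    dnorm p (fun i => c * F i) = c * dnorm p F := by
  unfold dnorm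
  split_ifs with hp'
  · exact (ENNReal.mul_iSup c F).symm
  · simp_rw [ENNReal.mul_rpow_of_nonneg _ _ ENNReal.toReal_nonneg, ENNReal.tsum_mul_left,
      ENNReal.mul_rpow_of_nonneg _ _ (by positivity : (0:ℝ) ≤ 1 / p.toReal),
      rpow_toReal_rpow_one_div hp hp']

lemma le_dnorm (hp : p ≠ 0) (F : ι → ℝ≥0∞) (i : ι) : F i ≤ dnorm p F := by
  unfold dnorm
  split_ifs with hp'
  · exact le_iSup F i
  · calc F i = (F i ^ p.toReal) ^ (1 / p.toReal) := (rpow_toReal_rpow_one_div hp hp' _).symm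
      _ ≤ _ := by gcongr; exact ENNReal.le_tsum i

lemma dnorm_comp_equiv (e : ι ≃ ι) (F : ι → ℝ≥0∞) : dnorm p (fun i => F (e i)) = dnorm p F := by
  unfold dnorm
  split_ifs
  · exact e.surjective.iSup_comp F
  · rw [e.tsum_eq fun i => F i ^ p.toReal]

lemma dnorm_eq_mnorm_count [MeasurableSpace ι] [MeasurableSingletonClass ι] [Countable ι]
    (F : ι → ℝ≥0∞) : dnorm p F = mnorm p Measure.count F := by
  unfold dnorm mnorm
  split_ifs
  · exact (essSup_count F).symm
  · rw [lintegral_count]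

lemma tsum_lintegral_le (ν : Measure α) (F : ι → α → ℝ≥0∞) :
    ∑' i, ∫⁻ x, F i x ∂ν ≤ ∫⁻ x, ∑' i, F i x ∂ν := by
  rw [ENNReal.tsum_eq_iSup_sum]
  refine iSup_le fun u => le_trans ?_ (lintegral_mono fun x => ENNReal.sum_le_tsum u)
  induction u using Finset.cons_induction with
  | empty => simp
  | cons i u hi ih =>
    simp only [Finset.sum_cons]
    exact (add_le_add_right ih _).trans (le_lintegral_add _ _)

lemma mnorm_tsum_le [Countable ι] (hp : 1 ≤ p) {F : ι → α → ℝ≥0∞}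
    (hF : ∀ i, AEMeasurable (F i) μ) :
    mnorm p μ (fun x => ∑' i, F i x) ≤ ∑' i, mnorm p μ (F i) := by
  unfold mnorm
  split_ifs with hp'
  · have h : ∀ᵐ x ∂μ, ∀ i, F i x ≤ essSup (F i) μ := ae_all_iff.2 fun i => ae_le_essSup (F i)
    exact essSup_le_of_ae_le _ (h.mono fun x hx => ENNReal.tsum_le_tsum hx)
  set t := p.toReal
  have ht : 1 ≤ t := by simpa using ENNReal.toReal_mono hp' hp
  have ht0 : 0 < t := one_pos.trans_le ht
  simp only [one_div]
  have finite_sum (s : Finset ι) :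
      ∫⁻ x, (∑ i ∈ s, F i x) ^ t ∂μ ≤ (∑ i ∈ s, (∫⁻ x, F i x ^ t ∂μ) ^ t⁻¹) ^ t := by
    have h := eLpNorm'_sum_le (f := F) (s := s) (fun i _ => (hF i).aestronglyMeasurable) ht
    simp only [eLpNorm', enorm_eq_self, Finset.sum_apply, one_div] at h
    rwa [ENNReal.rpow_inv_le_iff ht0] at h
  rw [ENNReal.rpow_inv_le_iff ht0]
  simp_rw [ENNReal.tsum_eq_iSup_sum]
  have hsup (x : α) : (⨆ s : Finset ι, ∑ i ∈ s, F i x) ^ t = ⨆ s : Finset ι, (∑ i ∈ s, F i x) ^ t :=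
    (ENNReal.orderIsoRpow t ht0).map_iSup _
  simp_rw [hsup]
  rw [lintegral_iSup_directed (fun s => (Finset.aemeasurable_fun_sum s fun i _ => hF i).pow_const _)
    (directed_of_isDirected_le fun s s' hs x => by gcongr)]
  exact iSup_le fun s => (finite_sum s).trans (by gcongr; exact le_iSup_of_le s le_rfl)

lemma dnorm_tsum_le [Countable ι] {κ : Type*} [Countable κ] (hp : 1 ≤ p) (F : ι → κ → ℝ≥0∞) :
    dnorm p (fun k => ∑' i, F i k) ≤ ∑' i, dnorm p (F i) := by
  let _ : MeasurableSpace κ := ⊤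
  simp_rw [dnorm_eq_mnorm_count]
  exact mnorm_tsum_le hp fun i => (measurable_of_countable (F i)).aemeasurable

lemma dnorm_tsum_mul_sub_le {κ : Type*} [AddGroup κ] [Countable κ] (hp : 1 ≤ p)
    (b c : κ → ℝ≥0∞) : dnorm p (fun k => ∑' m, b (k - m) * c m) ≤ dnorm p b * ∑' m, c m := by
  have hp0 : p ≠ 0 := (one_pos.trans_le hp).ne'
  calc dnorm p (fun k => ∑' m, b (k - m) * c m)
      ≤ ∑' m, dnorm p (fun k => c m * b (k - m)) := by
        simpa only [mul_comm] using dnorm_tsum_le hp fun m k => b (k - m) * c m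
    _ = ∑' m, c m * dnorm p b := by
        congr! 2 with m
        rw [dnorm_const_mul hp0]
        exact congrArg _ (dnorm_comp_equiv (Equiv.subRight m) b)
    _ = dnorm p b * ∑' m, c m := by rw [ENNReal.tsum_mul_right, mul_comm]

end Norms

section Periodization

variable {G ι : Type*} [MeasurableSpace G] [AddGroup G] [MeasurableAdd G] [Countable ι]
  {μ : Measure G} [μ.IsAddRightInvariant] {t : ι → G} {s : Set G}

lemma MeasureTheory.Measure.eq_sum_map_add_restrict (hs : MeasurableSet s)
    (hts : ∀ x, ∃! i, x - t i ∈ s) :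
    μ = Measure.sum fun i => (μ.restrict s).map (· + t i) := by
  set A : ι → Set G := fun i => (· + -t i) ⁻¹' s
  have hA : ∀ i, MeasurableSet (A i) := fun i => hs.preimage (measurable_add_const _)
  have hAs : ∀ i, (· + t i) ⁻¹' A i = s := fun i => by ext x; simp [A]
  have hdisj : Pairwise (Function.onFun Disjoint A) := fun i j hij =>
    Set.disjoint_left.2 fun x hi hj => hij <|
      (hts x).unique (by simpa [A, sub_eq_add_neg] using hi) (by simpa [A, sub_eq_add_neg] using hj)
  have hcover : (⋃ i, A i) = Set.univ := Set.eq_univ_of_forall fun x =>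
    Set.mem_iUnion.2 <| by simpa [A, sub_eq_add_neg] using (hts x).exists
  calc μ = μ.restrict (⋃ i, A i) := by rw [hcover, Measure.restrict_univ]
    _ = Measure.sum fun i => μ.restrict (A i) := Measure.restrict_iUnion hdisj hA
    _ = Measure.sum fun i => (μ.restrict s).map (· + t i) := by
        congr 1
        funext i
        rw [← hAs i, ← Measure.restrict_map (measurable_add_const _) (hA i), map_add_right_eq_self]

/-- Only `≤` is claimed: it needs no measurability of `Φ`. -/
lemma mnorm_le_mnorm_restrict_dnorm_add {p : ℝ≥0∞} (hp : p ≠ 0) (hs : MeasurableSet s)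
    (hts : ∀ x, ∃! i, x - t i ∈ s) (Φ : G → ℝ≥0∞) :
    mnorm p μ Φ ≤ mnorm p (μ.restrict s) fun y => dnorm p fun i => Φ (y + t i) := by
  have hμ := Measure.eq_sum_map_add_restrict (μ := μ) hs hts
  generalize μ.restrict s = ν at hμ ⊢
  subst hμ
  have hmap : ∀ i, ν.map (· + t i) = ν.map (MeasurableEquiv.addRight (t i)) := fun i => rfl
  unfold mnorm dnorm
  split_ifs with hp'
  · refine essSup_le_of_ae_le _ ?_
    refine Measure.ae_sum_iff.2 fun i => ?_
    rw [hmap, ← MeasurableEquiv.map_ae, Filter.eventually_map]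
    filter_upwards [ae_le_essSup (fun y => ⨆ i, Φ (y + t i))] with y hy
    exact (le_iSup (fun i => Φ (y + t i)) i).trans hy
  · refine ENNReal.rpow_le_rpow ?_ (by positivity)
    calc ∫⁻ x, Φ x ^ p.toReal ∂Measure.sum (fun i => ν.map (· + t i))
        = ∑' i, ∫⁻ y, Φ (y + t i) ^ p.toReal ∂ν := by
          rw [lintegral_sum_measure]
          congr 1
          funext i
          rw [hmap, lintegral_map_equiv]
          rfl
      _ ≤ ∫⁻ y, ∑' i, Φ (y + t i) ^ p.toReal ∂ν := tsum_lintegral_le _ _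
      _ = _ := by
          simp_rw [one_div, ENNReal.rpow_inv_rpow (ENNReal.toReal_ne_zero.2 ⟨hp, hp'⟩)]

end Periodization

lemma sub_intCast_mem_Ico_iff (x : ℝ) (k : ℤ) : x - k ∈ Set.Ico (0 : ℝ) 1 ↔ ⌊x⌋ = k := by
  rw [Int.floor_eq_iff, Set.mem_Ico, sub_nonneg, sub_lt_iff_lt_add']

lemma mnorm_volume_le_mnorm_Icc_dnorm {p : ℝ≥0∞} (hp : p ≠ 0) (Φ : ℝ → ℝ≥0∞) :
    mnorm p volume Φ ≤
      mnorm p (volume.restrict (Set.Icc (0 : ℝ) 1)) fun y => dnorm p fun k : ℤ => Φ (y + k) := by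
  have h := mnorm_le_mnorm_restrict_dnorm_add (μ := volume) (t := fun k : ℤ => (k : ℝ)) hp
    measurableSet_Ico (fun x => ⟨⌊x⌋, (sub_intCast_mem_Ico_iff x _).2 rfl,
      fun k hk => ((sub_intCast_mem_Ico_iff x k).1 hk).symm⟩) Φ
  rwa [Measure.restrict_congr_set Ico_ae_eq_Icc] at h

lemma mnorm_volume_le_mnorm_cube_dnorm {d : ℕ} {p : ℝ≥0∞} (hp : p ≠ 0) (Φ : Rd d → ℝ≥0∞) :
    mnorm p volume Φ ≤
      mnorm p (volume.restrict (cube d)) fun y => dnorm p fun k : Zd d => Φ (y + zcast k) := by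
  have hmem (x : Rd d) (k : Zd d) :
      x - zcast k ∈ Set.univ.pi (fun _ => Set.Ico 0 1) ↔ (fun i => ⌊x i⌋) = k := by
    simp only [Set.mem_univ_pi, funext_iff, ← sub_intCast_mem_Ico_iff, Pi.sub_apply, zcast]
  have h := mnorm_le_mnorm_restrict_dnorm_add (μ := volume) (t := zcast) hp
    (MeasurableSet.univ_pi fun _ => measurableSet_Ico)
    (fun x => ⟨_, (hmem x _).2 rfl, fun k hk => ((hmem x k).1 hk).symm⟩) Φ
  have hcube : Set.univ.pi (fun _ => Set.Ico 0 1) =ᵐ[volume] cube d := by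
    rw [volume_pi]
    exact Measure.univ_pi_Ico_ae_eq_Icc
  rwa [Measure.restrict_congr_set hcube] at h

section MixedNorms

variable {d : ℕ} {p q : ℝ≥0∞} {a : ℤ × Zd d → ℝ≥0∞} {F : ℝ × Rd d → ℝ≥0∞}

lemma tsum_mul_sub_add_eq (a : ℤ × Zd d → ℝ≥0∞) (F : ℝ × Rd d → ℝ≥0∞) (y₁ : ℝ) (y₂ : Rd d)
    (k₁ : ℤ) (k₂ : Zd d) :
    ∑' j : ℤ × Zd d, a j * F (y₁ + k₁ - j.1, y₂ + zcast k₂ - zcast j.2) =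
      ∑' (m₁ : ℤ) (m₂ : Zd d), a (k₁ - m₁, k₂ - m₂) * F (y₁ + m₁, y₂ + zcast m₂) := by
  rw [← (Equiv.subLeft (k₁, k₂)).tsum_eq, ← ENNReal.tsum_prod]
  refine tsum_congr fun ⟨m₁, m₂⟩ => ?_
  have h₁ : y₁ + k₁ - ((k₁ - m₁ : ℤ) : ℝ) = y₁ + m₁ := by push_cast; ring
  have h₂ : y₂ + zcast k₂ - zcast (k₂ - m₂) = y₂ + zcast m₂ := by ext i; simp [zcast]; ring
  simp only [Equiv.subLeft_apply, Prod.mk_sub_mk, h₁, h₂]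

lemma mnorm_cube_dnorm_conv_le (hq : 1 ≤ q) (hF : Measurable F)
    (ha : ∀ j₁, dnorm q (fun j₂ => a (j₁, j₂)) ≠ ∞) (y₁ : ℝ) (k₁ : ℤ) :
    mnorm q (volume.restrict (cube d)) (fun y₂ => dnorm q fun k₂ =>
        ∑' (m₁ : ℤ) (m₂ : Zd d), a (k₁ - m₁, k₂ - m₂) * F (y₁ + m₁, y₂ + zcast m₂)) ≤
      ∑' m₁ : ℤ, dnorm q (fun j₂ => a (k₁ - m₁, j₂)) *
        mnorm q (volume.restrict (cube d)) fun y₂ => ∑' m₂, F (y₁ + m₁, y₂ + zcast m₂) := by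
  have hq0 : q ≠ 0 := (one_pos.trans_le hq).ne'
  calc _ ≤ mnorm q (volume.restrict (cube d)) (fun y₂ => ∑' m₁ : ℤ,
          dnorm q (fun j₂ => a (k₁ - m₁, j₂)) * ∑' m₂, F (y₁ + m₁, y₂ + zcast m₂)) :=
        mnorm_mono fun y₂ => (dnorm_tsum_le hq _).trans <|
          ENNReal.tsum_le_tsum fun m₁ => dnorm_tsum_mul_sub_le hq _ _
    _ ≤ _ := mnorm_tsum_le hq fun m₁ => (Measurable.const_mul (Measurable.tsum
          fun m₂ => hF.comp (measurable_const.prodMk (measurable_add_const _))) _).aemeasurable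
    _ = _ := by simp_rw [mnorm_const_mul hq0 (ha _)]

theorem mnorm_mnorm_tsum_mul_le (hp : 1 ≤ p) (hq : 1 ≤ q) (hF : Measurable F)
    (ha : dnorm p (fun j₁ => dnorm q fun j₂ => a (j₁, j₂)) ≠ ∞) :
    mnorm p volume (fun x₁ => mnorm q volume fun x₂ =>
        ∑' j : ℤ × Zd d, a j * F (x₁ - j.1, x₂ - zcast j.2)) ≤
      dnorm p (fun j₁ => dnorm q fun j₂ => a (j₁, j₂)) *
        mnorm p (volume.restrict (Set.Icc (0 : ℝ) 1)) fun x₁ => ∑' j₁ : ℤ,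
          mnorm q (volume.restrict (cube d)) fun x₂ =>
            ∑' j₂ : Zd d, F (x₁ + j₁, x₂ + zcast j₂) := by
  have hp0 : p ≠ 0 := (one_pos.trans_le hp).ne'
  have hq0 : q ≠ 0 := (one_pos.trans_le hq).ne'
  have hrow (j₁ : ℤ) : dnorm q (fun j₂ => a (j₁, j₂)) ≠ ∞ :=
    ne_top_of_le_ne_top ha (le_dnorm hp0 (fun j₁ => dnorm q fun j₂ => a (j₁, j₂)) j₁)
  have h_fiber (y₁ : ℝ) : dnorm p (fun k₁ : ℤ => mnorm q (volume.restrict (cube d)) fun y₂ =>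
        dnorm q fun k₂ => ∑' j : ℤ × Zd d, a j * F (y₁ + k₁ - j.1, y₂ + zcast k₂ - zcast j.2)) ≤
      dnorm p (fun j₁ => dnorm q fun j₂ => a (j₁, j₂)) * ∑' m₁ : ℤ,
        mnorm q (volume.restrict (cube d)) fun y₂ => ∑' m₂, F (y₁ + m₁, y₂ + zcast m₂) := by
    simp_rw [tsum_mul_sub_add_eq]
    exact (dnorm_mono fun k₁ => mnorm_cube_dnorm_conv_le hq hF hrow y₁ k₁).trans
      (dnorm_tsum_mul_sub_le hp _ _)
  calc _ ≤ mnorm p (volume.restrict (Set.Icc (0 : ℝ) 1)) (fun y₁ => dnorm p fun k₁ : ℤ =>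
          mnorm q volume fun x₂ => ∑' j : ℤ × Zd d, a j * F (y₁ + k₁ - j.1, x₂ - zcast j.2)) :=
        mnorm_volume_le_mnorm_Icc_dnorm hp0 fun x₁ => mnorm q volume fun x₂ =>
          ∑' j : ℤ × Zd d, a j * F (x₁ - j.1, x₂ - zcast j.2)
    _ ≤ mnorm p (volume.restrict (Set.Icc (0 : ℝ) 1)) (fun y₁ => dnorm p fun k₁ : ℤ =>
          mnorm q (volume.restrict (cube d)) fun y₂ => dnorm q fun k₂ =>
            ∑' j : ℤ × Zd d, a j * F (y₁ + k₁ - j.1, y₂ + zcast k₂ - zcast j.2)) :=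
        mnorm_mono fun y₁ => dnorm_mono fun k₁ => mnorm_volume_le_mnorm_cube_dnorm hq0 fun x₂ =>
          ∑' j : ℤ × Zd d, a j * F (y₁ + k₁ - j.1, x₂ - zcast j.2)
    _ ≤ mnorm p (volume.restrict (Set.Icc (0 : ℝ) 1)) (fun y₁ =>
          dnorm p (fun j₁ => dnorm q fun j₂ => a (j₁, j₂)) * ∑' m₁ : ℤ,
            mnorm q (volume.restrict (cube d)) fun y₂ => ∑' m₂, F (y₁ + m₁, y₂ + zcast m₂)) :=
        mnorm_mono h_fiber
    _ = _ := mnorm_const_mul hp0 ha _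

end MixedNorms

lemma enorm_semiConv_le {d : ℕ} (f : ℝ × Rd d → ℂ) (D : ℤ × Zd d → ℂ) (x : ℝ × Rd d) :
    ‖semiConv f D x‖ₑ ≤ ∑' j : ℤ × Zd d, ‖D j‖ₑ * ‖f (x.1 - j.1, x.2 - zcast j.2)‖ₑ :=
  enorm_tsum_le_tsum_enorm.trans_eq (by simp_rw [enorm_mul])

theorem stmt0_general {d : ℕ} (p q : ℝ≥0∞) (hp : 1 ≤ p) (hq : 1 ≤ q)
    (f : ℝ × Rd d → ℂ) (hf : Measurable f)
    (D : ℤ × Zd d → ℂ) (hD : lpq p q D ≠ ∞) :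
    mixedLpq p q (semiConv f D) ≤ lpq p q D * amal p q f :=
  (mnorm_mono fun x₁ => mnorm_mono fun x₂ => enorm_semiConv_le f D (x₁, x₂)).trans
    (mnorm_mnorm_tsum_mul_le (a := fun j => ‖D j‖ₑ) (F := fun x => ‖f x‖ₑ) hp hq hf.enorm hD)

/-- Lemma 2.1: `‖f ∗' D‖_{L^{p,q}} ≤ ‖D‖_{ℓ^{p,q}} ‖f‖_{𝓛^{p,q}}`. -/
theorem stmt0 {d : ℕ} (p q : ℝ≥0∞) (hp : 1 ≤ p) (hq : 1 ≤ q)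
    (f : ℝ × Rd d → ℂ) (hf : Measurable f)
    (D : ℤ × Zd d → ℂ) (hD : lpq p q D ≠ ∞) (hfa : amal p q f ≠ ∞) :
    mixedLpq p q (semiConv f D) ≤ lpq p q D * amal p q f :=
  stmt0_general p q hp hq f hf D hD
end
end

section
/- Let M(ξ,ξ̃) be a continuous, 2π-periodic (in each variable), positive semi-definite Hermitian r×r matrix-valued function on R × R^d. Then the following are equivalent: (a) rank M(ξ,ξ̃) is constant on R × R^d; (b) there exists a constant C > 0 independent of (ξ,ξ̃) such that C⁻¹ M(ξ,ξ̃) ≤ M(ξ,ξ̃)² ≤ C M(ξ,ξ̃) (as Hermitian matrices) for all (ξ,ξ̃) ∈ [−π,π] × [−π,π]^d. -/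
open MeasureTheory Filter
open scoped ComplexOrder

noncomputable section

/-- the Loewner order on Hermitian matrices: `A ≤ B` iff `B - A` is positive semidefinite -/
def matLE {r : ℕ} (A B : Matrix (Fin r) (Fin r) ℂ) : Prop := (B - A).PosSemidef

/-!
Both directions go through the characteristic polynomial, whose coefficients depend
continuously on the matrix. For a Hermitian `A` of rank `k` on `𝕜ⁿ` one has
`charpoly A = X ^ (n - k) * ∏_{λᵢ ≠ 0} (X - λᵢ)`, so the coefficients below `X ^ (n - k)`
vanish and the coefficient of `X ^ (n - k)` has modulus `∏_{λᵢ ≠ 0} |λᵢ|`.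

If the rank is constant, this product is a continuous positive function, hence bounded
below on the compact fundamental domain; together with `λᵢ ≤ tr A` this bounds every nonzero
eigenvalue below. Conversely, the two-sided estimate (by periodicity, everywhere) puts every
eigenvalue in `{0} ∪ [C⁻¹, C]`; then a jump of the rank up to `m` near `x₀` would make the
coefficient of `X ^ (n - m)`, which vanishes at `x₀`, at least `min C⁻¹ 1 ^ n` in modulus.
With the general lower semicontinuity of the rank, the rank is locally constant, hence
constant.
-/

open Matrix Finset Topology
open scoped MatrixOrder

variable {𝕜 : Type*} [RCLike 𝕜] {n : Type*} [Fintype n] [DecidableEq n] {A : Matrix n n 𝕜}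

namespace Matrix.IsHermitian

lemma smul_le_mul_self_iff (hA : A.IsHermitian) (c : ℝ) :
    c • A ≤ A * A ↔ ∀ i, c * hA.eigenvalues i ≤ hA.eigenvalues i ^ 2 := by
  have : A * A - c • A = cfc (fun x : ℝ => x ^ 2 - c * x) A := by
    rw [cfc_sub .., cfc_pow .., cfc_const_mul .., cfc_id' ℝ A, sq]
  rw [← sub_nonneg, this, cfc_nonneg_iff _ A, hA.spectrum_real_eq_range_eigenvalues]
  simp [sub_nonneg]

lemma mul_self_le_smul_iff (hA : A.IsHermitian) (c : ℝ) :
    A * A ≤ c • A ↔ ∀ i, hA.eigenvalues i ^ 2 ≤ c * hA.eigenvalues i := by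
  have : c • A - A * A = cfc (fun x : ℝ => c * x - x ^ 2) A := by
    rw [cfc_sub .., cfc_pow .., cfc_const_mul .., cfc_id' ℝ A, sq]
  rw [← sub_nonneg, this, cfc_nonneg_iff _ A, hA.spectrum_real_eq_range_eigenvalues]
  simp [sub_nonneg]

lemma rank_eq_card_filter (hA : A.IsHermitian) : A.rank = #{i | hA.eigenvalues i ≠ 0} := by
  rw [hA.rank_eq_card_non_zero_eigs, Fintype.card_subtype]

section
open Polynomial

lemma charpoly_eq_X_pow_mul (hA : A.IsHermitian) :
    A.charpoly = X ^ (Fintype.card n - A.rank) *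
      ∏ i ∈ {i | hA.eigenvalues i ≠ 0}, (X - C (hA.eigenvalues i : 𝕜)) := by
  have hcard : #{i | ¬hA.eigenvalues i ≠ 0} = Fintype.card n - A.rank := by
    rw [hA.rank_eq_card_filter, ← card_univ,
      ← card_filter_add_card_filter_not (s := univ) (fun i => hA.eigenvalues i ≠ 0)]
    omega
  have hzero : ∏ i ∈ {i | ¬hA.eigenvalues i ≠ 0}, (X - C (hA.eigenvalues i : 𝕜)) =
      X ^ (Fintype.card n - A.rank) := by
    rw [prod_congr rfl fun i hi => by rw [not_not.mp (mem_filter.mp hi).2], prod_const, hcard]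
    simp
  rw [hA.charpoly_eq, ← prod_filter_mul_prod_filter_not univ (fun i => hA.eigenvalues i ≠ 0),
    hzero, mul_comm]

lemma coeff_charpoly_of_lt (hA : A.IsHermitian) {j : ℕ} (hj : j < Fintype.card n - A.rank) :
    A.charpoly.coeff j = 0 := by
  rw [hA.charpoly_eq_X_pow_mul, coeff_X_pow_mul', if_neg hj.not_ge]

lemma norm_coeff_charpoly_card_sub_rank (hA : A.IsHermitian) :
    ‖A.charpoly.coeff (Fintype.card n - A.rank)‖ =
      ∏ i ∈ {i | hA.eigenvalues i ≠ 0}, |hA.eigenvalues i| := by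
  rw [hA.charpoly_eq_X_pow_mul, coeff_X_pow_mul', if_pos le_rfl, Nat.sub_self,
    coeff_zero_eq_eval_zero, eval_prod, norm_prod]
  simp

end

end Matrix.IsHermitian

namespace Matrix.PosSemidef

lemma inv_smul_le_mul_self_and_mul_self_le_smul_iff (hA : A.PosSemidef) (C : ℝ) :
    (C⁻¹ • A ≤ A * A ∧ A * A ≤ C • A) ↔
      ∀ i, hA.1.eigenvalues i = 0 ∨ hA.1.eigenvalues i ∈ Set.Icc C⁻¹ C := by
  rw [hA.1.smul_le_mul_self_iff, hA.1.mul_self_le_smul_iff, ← forall_and]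
  refine forall_congr' fun i => ?_
  rcases (hA.eigenvalues_nonneg i).eq_or_lt with h | h
  · simp [← h]
  · rw [sq, mul_le_mul_iff_left₀ h, mul_le_mul_iff_left₀ h]
    simp [h.ne', Set.mem_Icc]

lemma eigenvalues_le_re_trace (hA : A.PosSemidef) (i : n) :
    hA.1.eigenvalues i ≤ RCLike.re A.trace := by
  rw [hA.1.trace_eq_sum_eigenvalues, map_sum]
  simp only [RCLike.ofReal_re]
  exact single_le_sum (fun j _ => hA.eigenvalues_nonneg j) (mem_univ i)

lemma prod_nonzero_eigenvalues_le (hA : A.PosSemidef) {T : ℝ} (hT : 1 ≤ T)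
    (hle : ∀ i, hA.1.eigenvalues i ≤ T) {j : n} (hj : hA.1.eigenvalues j ≠ 0) :
    ∏ i ∈ {i | hA.1.eigenvalues i ≠ 0}, hA.1.eigenvalues i ≤
      hA.1.eigenvalues j * T ^ Fintype.card n := by
  have hjS : j ∈ ({i | hA.1.eigenvalues i ≠ 0} : Finset n) := by simpa using hj
  rw [← mul_prod_erase _ _ hjS]
  gcongr
  · exact hA.eigenvalues_nonneg j
  calc ∏ i ∈ _, hA.1.eigenvalues i ≤ ∏ i ∈ _, T :=
        prod_le_prod (fun i _ => hA.eigenvalues_nonneg i) fun i _ => hle i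
    _ = T ^ _ := prod_const T
    _ ≤ T ^ Fintype.card n := pow_le_pow_right₀ hT (card_erase_le.trans (card_le_univ _))

end Matrix.PosSemidef

lemma Continuous.matrix_charpoly_coeff {X R : Type*} [TopologicalSpace X] [CommRing R]
    [TopologicalSpace R] [IsTopologicalRing R] {M : X → Matrix n n R} (hM : Continuous M)
    (j : ℕ) : Continuous fun x => (M x).charpoly.coeff j := by
  have h : (fun x => (M x).charpoly.coeff j) =
      fun x => MvPolynomial.eval (fun p => M x p.1 p.2) ((charpoly.univ R n).coeff j) := by
    ext x
    rw [MvPolynomial.eval, charpoly.univ_coeff_eval₂Hom]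
    congr
  rw [h]
  exact (MvPolynomial.continuous_eval _).comp (continuous_pi fun p => hM.matrix_elem p.1 p.2)

section

variable {X : Type*} [TopologicalSpace X] {M : X → Matrix n n 𝕜}

lemma eventually_rank_le_rank (hM : Continuous M) (hH : ∀ x, (M x).IsHermitian) (x₀ : X) :
    ∀ᶠ x in 𝓝 x₀, (M x₀).rank ≤ (M x).rank := by
  have hne : (M x₀).charpoly.coeff (Fintype.card n - (M x₀).rank) ≠ 0 := by
    rw [← norm_pos_iff, (hH x₀).norm_coeff_charpoly_card_sub_rank]
    exact prod_pos fun i hi => abs_pos.mpr (mem_filter.mp hi).2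
  filter_upwards [(hM.matrix_charpoly_coeff _).continuousAt.eventually_ne hne] with x hx
  by_contra! hlt
  have hk := (M x₀).rank_le_card_width
  exact hx ((hH x).coeff_charpoly_of_lt (by omega))

lemma eventually_rank_le_rank_of_le_abs_eigenvalues (hM : Continuous M)
    (hH : ∀ x, (M x).IsHermitian) {a : ℝ} (ha : 0 < a)
    (hgap : ∀ x i, (hH x).eigenvalues i ≠ 0 → a ≤ |(hH x).eigenvalues i|) (x₀ : X) :
    ∀ᶠ x in 𝓝 x₀, (M x).rank ≤ (M x₀).rank := by
  set b := min a 1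
  have hb : 0 < b := lt_min ha one_pos
  have hsmall : ∀ᶠ x in 𝓝 x₀, ∀ j ∈ range (Fintype.card n - (M x₀).rank),
      ‖(M x).charpoly.coeff j‖ < b ^ Fintype.card n := by
    refine (eventually_all_finset _).mpr fun j hj => ?_
    refine (hM.matrix_charpoly_coeff j).norm.continuousAt.eventually_lt continuousAt_const ?_
    rw [(hH x₀).coeff_charpoly_of_lt (mem_range.mp hj), norm_zero]
    positivity
  filter_upwards [hsmall] with x hx
  by_contra! hlt
  have hsmallx := hx (Fintype.card n - (M x).rank)
    (mem_range.mpr (by have := (M x).rank_le_card_width; omega))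
  rw [(hH x).norm_coeff_charpoly_card_sub_rank] at hsmallx
  refine hsmallx.not_ge ?_
  calc b ^ Fintype.card n ≤ b ^ #{i | (hH x).eigenvalues i ≠ 0} :=
        pow_le_pow_of_le_one hb.le (min_le_right _ _) (card_le_univ _)
    _ = ∏ i ∈ {i | (hH x).eigenvalues i ≠ 0}, b := (prod_const b).symm
    _ ≤ ∏ i ∈ {i | (hH x).eigenvalues i ≠ 0}, |(hH x).eigenvalues i| :=
        prod_le_prod (fun _ _ => hb.le)
          fun i hi => (min_le_left _ _).trans (hgap x i (mem_filter.mp hi).2)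

lemma isLocallyConstant_rank_of_le_abs_eigenvalues (hM : Continuous M)
    (hH : ∀ x, (M x).IsHermitian) {a : ℝ} (ha : 0 < a)
    (hgap : ∀ x i, (hH x).eigenvalues i ≠ 0 → a ≤ |(hH x).eigenvalues i|) :
    IsLocallyConstant fun x => (M x).rank :=
  IsLocallyConstant.iff_eventually_eq _ |>.mpr fun x₀ => by
    filter_upwards [eventually_rank_le_rank hM hH x₀,
      eventually_rank_le_rank_of_le_abs_eigenvalues hM hH ha hgap x₀] with x h₁ h₂
    exact le_antisymm h₂ h₁

lemma exists_eigenvalues_bounds_of_rank_eq (hM : Continuous M) (hpsd : ∀ x, (M x).PosSemidef)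
    {k : ℕ} (hrk : ∀ x, (M x).rank = k) {K : Set X} (hK : IsCompact K) :
    ∃ c T : ℝ, 0 < c ∧ ∀ x ∈ K, ∀ i, (hpsd x).1.eigenvalues i ≤ T ∧
      ((hpsd x).1.eigenvalues i ≠ 0 → c ≤ (hpsd x).1.eigenvalues i) := by
  obtain ⟨T, hT⟩ := hK.bddAbove_image (RCLike.continuous_re.comp hM.matrix_trace).continuousOn
  obtain ⟨m, hm, hmK⟩ := hK.exists_forall_le' (a := 0)
    (hM.matrix_charpoly_coeff (Fintype.card n - k)).norm.continuousOn fun x _ => by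
      rw [← hrk x, (hpsd x).1.norm_coeff_charpoly_card_sub_rank]
      exact prod_pos fun i hi => abs_pos.mpr (mem_filter.mp hi).2
  set T' := max T 1
  refine ⟨m / T' ^ Fintype.card n, T', by positivity, fun x hx => ?_⟩
  have hupper : ∀ i, (hpsd x).1.eigenvalues i ≤ T' := fun i =>
    ((hpsd x).eigenvalues_le_re_trace i).trans
      ((mem_upperBounds.mp hT _ ⟨x, hx, rfl⟩).trans (le_max_left _ _))
  refine fun i => ⟨hupper i, fun hi => ?_⟩
  have hprod := hmK x hx
  rw [← hrk x, (hpsd x).1.norm_coeff_charpoly_card_sub_rank] at hprod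
  rw [div_le_iff₀ (by positivity)]
  calc m ≤ ∏ i ∈ {i | (hpsd x).1.eigenvalues i ≠ 0}, |(hpsd x).1.eigenvalues i| := hprod
    _ = ∏ i ∈ {i | (hpsd x).1.eigenvalues i ≠ 0}, (hpsd x).1.eigenvalues i :=
        prod_congr rfl fun i _ => abs_of_nonneg ((hpsd x).eigenvalues_nonneg i)
    _ ≤ _ := (hpsd x).prod_nonzero_eigenvalues_le (le_max_right _ _) hupper hi

end

lemma exists_int_add_two_pi_mul_mem_Icc (x : ℝ) :
    ∃ k : ℤ, x + 2 * Real.pi * k ∈ Set.Icc (-Real.pi) Real.pi := by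
  have h := toIcoMod_mem_Ico Real.two_pi_pos (-Real.pi) x
  rw [← self_sub_toIcoDiv_zsmul, zsmul_eq_mul, show -Real.pi + 2 * Real.pi = Real.pi by ring] at h
  refine ⟨-toIcoDiv Real.two_pi_pos (-Real.pi) x, Set.Ico_subset_Icc_self ?_⟩
  convert h using 2
  push_cast
  ring

lemma exists_add_two_pi_mul_mem_fundamentalDomain {d : ℕ} (ξ : ℝ × Rd d) :
    ∃ (k₁ : ℤ) (k₂ : Fin d → ℤ),
      (ξ.1 + 2 * Real.pi * (k₁:ℝ), ξ.2 + (2 * Real.pi) • (fun i => (k₂ i : ℝ))) ∈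
        Set.Icc (-Real.pi) Real.pi ×ˢ Set.Icc (fun _ => -Real.pi : Rd d) (fun _ => Real.pi) := by
  obtain ⟨k₁, h₁⟩ := exists_int_add_two_pi_mul_mem_Icc ξ.1
  choose k₂ h₂ using fun i => exists_int_add_two_pi_mul_mem_Icc (ξ.2 i)
  exact ⟨k₁, k₂, h₁,
    fun i => by simpa using (h₂ i).1, fun i => by simpa using (h₂ i).2⟩

/-- Lemma 2.8 (matrix core): for a continuous `2π`-periodic positive semidefinite
Hermitian matrix function `M`, constant rank is equivalent to the two-sided estimate
`C⁻¹ M ≤ M² ≤ C M` on the fundamental domain. -/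
theorem stmt8 {d r : ℕ} (M : ℝ × Rd d → Matrix (Fin r) (Fin r) ℂ)
    (hcont : Continuous M)
    (hper : ∀ (ξ : ℝ × Rd d) (k₁ : ℤ) (k₂ : Fin d → ℤ),
      M (ξ.1 + 2 * Real.pi * (k₁:ℝ), ξ.2 + (2 * Real.pi) • (fun i => (k₂ i : ℝ))) = M ξ)
    (hpsd : ∀ ξ, (M ξ).PosSemidef) :
    (∀ ξ η : ℝ × Rd d, (M ξ).rank = (M η).rank) ↔
      ∃ C : ℝ, 0 < C ∧ ∀ ξ ∈ (Set.Icc (-Real.pi) Real.pi ×ˢ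
          Set.Icc (fun _ => -Real.pi : Rd d) (fun _ => Real.pi)),
        matLE ((C⁻¹ : ℝ) • M ξ) (M ξ * M ξ) ∧ matLE (M ξ * M ξ) ((C : ℝ) • M ξ) := by
  constructor
  · intro hrk
    obtain ⟨c, T, hc, hbound⟩ := exists_eigenvalues_bounds_of_rank_eq hcont hpsd
      (fun ξ => hrk ξ 0) (isCompact_Icc.prod isCompact_Icc)
    have hC : 0 < max T c⁻¹ := lt_max_of_lt_right (inv_pos.mpr hc)
    refine ⟨max T c⁻¹, hC, fun ξ hξ =>
      ((hpsd ξ).inv_smul_le_mul_self_and_mul_self_le_smul_iff _).mpr fun i => ?_⟩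
    refine (eq_or_ne _ 0).imp_right fun hi => ⟨?_, (hbound ξ hξ i).1.trans (le_max_left _ _)⟩
    exact (inv_le_of_inv_le₀ hc (le_max_right _ _)).trans ((hbound ξ hξ i).2 hi)
  · rintro ⟨C, hC, hbd⟩
    have hgap : ∀ ξ i, (hpsd ξ).1.eigenvalues i ≠ 0 →
        C⁻¹ ≤ |(hpsd ξ).1.eigenvalues i| := by
      intro ξ i hi
      obtain ⟨k₁, k₂, hmem⟩ := exists_add_two_pi_mul_mem_fundamentalDomain ξ
      have hξ := hbd _ hmem
      rw [hper] at hξ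
      rw [abs_of_nonneg ((hpsd ξ).eigenvalues_nonneg i)]
      exact ((((hpsd ξ).inv_smul_le_mul_self_and_mul_self_le_smul_iff _).mp hξ i).resolve_left
        hi).1
    exact (isLocallyConstant_rank_of_le_abs_eigenvalues hcont (fun ξ => (hpsd ξ).1)
      (inv_pos.mpr hC) hgap).apply_eq_of_preconnectedSpace
end
end

section
/- Let 1 ≤ p ≤ ∞, f ∈ L^p(R^d) and g ∈ 𝓛^∞(R^d), where ‖g‖_{𝓛^∞} = ess sup_{x∈[0,1]^d} Σ_{j∈Z^d} |g(x+j)|. Then the sequence c(j) = ∫_{R^d} f(x) g(x−j) dx belongs to ℓ^p(Z^d) and ‖c‖_{ℓ^p} ≤ ‖f‖_{L^p} ‖g‖_{𝓛^∞}. -/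
open MeasureTheory ENNReal

noncomputable section

/-- the amalgam norm `‖g‖_{𝓛^∞} = ess sup_{x∈[0,1]^d} Σ_{j∈ℤ^d} |g(x+j)|` -/
def amalInf {d : ℕ} (g : Rd d → ℂ) : ℝ≥0∞ :=
  essSup (fun x => ∑' j : Zd d, (‖g (x + zcast j)‖₊ : ℝ≥0∞))
    (volume.restrict (Set.Icc (0 : Rd d) 1))

/-!
Cut `ℝ^d` into the `ℤ^d`-translates of the cube `[0,1)^d`. Then
`∫ |g| = ∫_{[0,1)^d} Σ_j |g(x+j)| dx`, and the `ℤ^d`-periodic function `Σ_j |g(x+j)|` is bounded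
a.e. on `ℝ^d` by `‖g‖_{𝓛^∞}`, since it is so on the cube. Hölder's inequality against the weight
`|g(· - j)|`, of mass at most `‖g‖_{𝓛^∞}`, gives
`|c(j)|^p ≤ ‖g‖_{𝓛^∞}^{p-1} ∫ |f(x)|^p |g(x - j)| dx`; summing over `j` brings back the
periodization, whence `‖c‖_p^p ≤ ‖g‖_{𝓛^∞}^p ‖f‖_p^p`. For `p = ∞` one just bounds `|f|` by `‖f‖_∞`.
-/

lemma rpow_lintegral_mul_le_lintegral_rpow_mul {α : Type*} [MeasurableSpace α] {μ : Measure α}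
    {F G : α → ℝ≥0∞} (hF : AEMeasurable F μ) (hG : AEMeasurable G μ) {r : ℝ} (hr : 1 ≤ r) :
    (∫⁻ a, F a * G a ∂μ) ^ r ≤ (∫⁻ a, G a ∂μ) ^ (r - 1) * ∫⁻ a, F a ^ r * G a ∂μ := by
  have hr0 : 0 < r := zero_lt_one.trans_le hr
  have hinv : 1 / r ≤ 1 := (div_le_one hr0).mpr hr
  have hsplit (a : α) : F a * G a = (F a ^ r * G a) ^ (1 / r) * G a ^ (1 - 1 / r) := by
    rw [ENNReal.mul_rpow_of_nonneg _ _ (by positivity), ← ENNReal.rpow_mul,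
      mul_one_div_cancel hr0.ne', ENNReal.rpow_one, mul_assoc,
      ← ENNReal.rpow_add_of_nonneg _ _ (by positivity) (sub_nonneg.mpr hinv),
      add_sub_cancel, ENNReal.rpow_one]
  calc (∫⁻ a, F a * G a ∂μ) ^ r
      = (∫⁻ a, (F a ^ r * G a) ^ (1 / r) * G a ^ (1 - 1 / r) ∂μ) ^ r := by
        simp_rw [← hsplit]
    _ ≤ ((∫⁻ a, F a ^ r * G a ∂μ) ^ (1 / r) * (∫⁻ a, G a ∂μ) ^ (1 - 1 / r)) ^ r := by
        gcongr
        exact ENNReal.lintegral_mul_norm_pow_le ((hF.pow_const r).mul hG) hG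
          (by positivity) (sub_nonneg.mpr hinv) (add_sub_cancel _ _)
    _ = (∫⁻ a, G a ∂μ) ^ (r - 1) * ∫⁻ a, F a ^ r * G a ∂μ := by
        rw [ENNReal.mul_rpow_of_nonneg _ _ hr0.le, ← ENNReal.rpow_mul, ← ENNReal.rpow_mul,
          one_div_mul_cancel hr0.ne', ENNReal.rpow_one, sub_mul, one_div_mul_cancel hr0.ne',
          one_mul, mul_comm]

lemma enorm_integral_mul_le_lintegral {α 𝕜 : Type*} [MeasurableSpace α] {μ : Measure α}
    [RCLike 𝕜] (f g : α → 𝕜) :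
    ‖∫ x, f x * g x ∂μ‖ₑ ≤ ∫⁻ x, ‖f x‖ₑ * ‖g x‖ₑ ∂μ :=
  (enorm_integral_le_lintegral_enorm _).trans_eq (by simp_rw [enorm_mul])

section Lattice

variable {d : ℕ}

lemma zcast_add (j k : Zd d) : zcast (j + k) = zcast j + zcast k := by
  funext i; simp [zcast]

lemma zcast_neg (j : Zd d) : zcast (-j) = -zcast j := by
  funext i; simp [zcast]

def latticeFloor (x : Rd d) : Zd d := fun i => ⌊x i⌋

lemma latticeFloor_add_zcast (x : Rd d) (k : Zd d) :
    latticeFloor (x + zcast k) = latticeFloor x + k := by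
  funext i; simp [latticeFloor, zcast, Int.floor_add_intCast]

lemma measurable_latticeFloor : Measurable (latticeFloor (d := d)) :=
  measurable_pi_lambda _ fun i => (measurable_pi_apply i).floor

/-- The half-open cube `[0,1)^d`. -/
def unitCube (d : ℕ) : Set (Rd d) := latticeFloor ⁻¹' {0}

lemma measurableSet_unitCube : MeasurableSet (unitCube d) :=
  measurable_latticeFloor (measurableSet_singleton 0)

lemma unitCube_subset_Icc : unitCube d ⊆ Set.Icc 0 1 := fun _ hx =>
  ⟨fun i => (Int.floor_eq_zero_iff.mp (congrFun hx i)).1,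
    fun i => (Int.floor_eq_zero_iff.mp (congrFun hx i)).2.le⟩

lemma volume_unitCube_le_one : volume (unitCube d) ≤ 1 :=
  (measure_mono unitCube_subset_Icc).trans_eq (by simp [Real.volume_Icc_pi])

lemma preimage_add_zcast_latticeFloor_fiber (k : Zd d) :
    (· + zcast k) ⁻¹' (latticeFloor ⁻¹' {k}) = unitCube d := by
  ext x
  simp [unitCube, latticeFloor_add_zcast]

lemma lintegral_eq_setLIntegral_unitCube_tsum {h : Rd d → ℝ≥0∞} (hh : Measurable h) :
    ∫⁻ x, h x = ∫⁻ x in unitCube d, ∑' k : Zd d, h (x + zcast k) := by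
  have hfibers : ∫⁻ x, h x = ∑' k : Zd d, ∫⁻ x in latticeFloor ⁻¹' {k}, h x := by
    rw [← lintegral_iUnion (fun k => measurable_latticeFloor (measurableSet_singleton k))
      (pairwise_disjoint_fiber _), ← Set.preimage_iUnion, Set.iUnion_of_singleton,
      Set.preimage_univ, Measure.restrict_univ]
  have htranslate (k : Zd d) :
      ∫⁻ x in latticeFloor ⁻¹' {k}, h x = ∫⁻ x in unitCube d, h (x + zcast k) := by
    rw [← preimage_add_zcast_latticeFloor_fiber k,
      (measurePreserving_add_right volume (zcast k)).setLIntegral_comp_preimage_emb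
        (measurableEmbedding_addRight (zcast k))]
  rw [hfibers, lintegral_tsum (f := fun k x => h (x + zcast k))
    fun k => (hh.comp (measurable_add_const (zcast k))).aemeasurable]
  exact tsum_congr htranslate

lemma ae_le_of_ae_restrict_unitCube {φ : Rd d → ℝ≥0∞} (hφ : Measurable φ)
    (hper : ∀ x k, φ (x + zcast k) = φ x) {c : ℝ≥0∞}
    (hc : ∀ᵐ x ∂volume.restrict (unitCube d), φ x ≤ c) : ∀ᵐ x, φ x ≤ c := by
  set N := {x | c < φ x}
  have hN : MeasurableSet N := measurableSet_lt measurable_const hφ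
  have hN_per (x : Rd d) (k : Zd d) :
      N.indicator (1 : Rd d → ℝ≥0∞) (x + zcast k) = N.indicator 1 x := by
    simp only [Set.indicator, N, Set.mem_ofPred_eq, hper, Pi.one_apply]
  have hN_cube : ∀ᵐ x ∂volume.restrict (unitCube d), N.indicator (1 : Rd d → ℝ≥0∞) x = 0 := by
    filter_upwards [hc] with x hx
    exact Set.indicator_of_notMem (show x ∉ N from not_lt.mpr hx) _
  have : volume N = 0 := by
    rw [← lintegral_indicator_one hN,
      lintegral_eq_setLIntegral_unitCube_tsum (measurable_one.indicator hN)]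
    refine (lintegral_congr_ae ?_).trans lintegral_zero
    filter_upwards [hN_cube] with x hx
    simp [hN_per, hx]
  simpa [ae_iff, N] using this

def periodization (h : Rd d → ℝ≥0∞) (x : Rd d) : ℝ≥0∞ := ∑' j : Zd d, h (x + zcast j)

lemma periodization_add_zcast (h : Rd d → ℝ≥0∞) (x : Rd d) (k : Zd d) :
    periodization h (x + zcast k) = periodization h x := by
  rw [periodization, periodization, ← (Equiv.addLeft k).tsum_eq (fun j => h (x + zcast j))]
  simp only [Equiv.coe_addLeft, zcast_add, add_assoc]

lemma tsum_sub_zcast_eq_periodization (h : Rd d → ℝ≥0∞) (x : Rd d) :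
    ∑' j : Zd d, h (x - zcast j) = periodization h x := by
  rw [periodization, ← (Equiv.neg (Zd d)).tsum_eq]
  simp only [Equiv.neg_apply, zcast_neg, sub_neg_eq_add]

lemma measurable_periodization {h : Rd d → ℝ≥0∞} (hh : Measurable h) :
    Measurable (periodization h) :=
  .tsum fun j => hh.comp (measurable_add_const (zcast j))

lemma amalInf_eq_essSup_periodization (g : Rd d → ℂ) :
    amalInf g = essSup (periodization fun x => ‖g x‖ₑ) (volume.restrict (Set.Icc 0 1)) := rfl

lemma ae_periodization_le_amalInf {g : Rd d → ℂ} (hg : Measurable g) :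
    ∀ᵐ x, periodization (fun x => ‖g x‖ₑ) x ≤ amalInf g := by
  refine ae_le_of_ae_restrict_unitCube (measurable_periodization hg.enorm)
    (periodization_add_zcast _) ?_
  refine ae_restrict_of_ae_restrict_of_subset unitCube_subset_Icc ?_
  rw [amalInf_eq_essSup_periodization]
  exact ENNReal.ae_le_essSup _

lemma lintegral_enorm_le_amalInf {g : Rd d → ℂ} (hg : Measurable g) :
    ∫⁻ x, ‖g x‖ₑ ≤ amalInf g := by
  rw [lintegral_eq_setLIntegral_unitCube_tsum hg.enorm]
  calc ∫⁻ x in unitCube d, periodization (fun x => ‖g x‖ₑ) x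
      ≤ ∫⁻ _ in unitCube d, amalInf g :=
        setLIntegral_mono_ae' measurableSet_unitCube
          (ae_periodization_le_amalInf hg |>.mono fun x hx _ => hx)
    _ = amalInf g * volume (unitCube d) := setLIntegral_const _ _
    _ ≤ amalInf g := mul_le_of_le_one_right' volume_unitCube_le_one

lemma lintegral_enorm_sub_zcast_le_amalInf {g : Rd d → ℂ} (hg : Measurable g) (j : Zd d) :
    ∫⁻ x, ‖g (x - zcast j)‖ₑ ≤ amalInf g :=
  (lintegral_sub_right_eq_self (fun x => ‖g x‖ₑ) (zcast j)).trans_le (lintegral_enorm_le_amalInf hg)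

lemma enorm_integral_mul_sub_zcast_le_eLpNorm_top (f : Rd d → ℂ) {g : Rd d → ℂ}
    (hg : Measurable g) (j : Zd d) :
    ‖∫ x, f x * g (x - zcast j)‖ₑ ≤ eLpNorm f ∞ volume * amalInf g :=
  calc ‖∫ x, f x * g (x - zcast j)‖ₑ
      ≤ ∫⁻ x, ‖f x‖ₑ * ‖g (x - zcast j)‖ₑ := enorm_integral_mul_le_lintegral _ _
    _ ≤ ∫⁻ x, eLpNorm f ∞ volume * ‖g (x - zcast j)‖ₑ := by
        refine lintegral_mono_ae ?_
        filter_upwards [enorm_ae_le_eLpNormEssSup f volume] with x hx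
        rw [eLpNorm_exponent_top]
        gcongr
    _ = eLpNorm f ∞ volume * ∫⁻ x, ‖g (x - zcast j)‖ₑ :=
        lintegral_const_mul _ (hg.comp (measurable_sub_const _)).enorm
    _ ≤ eLpNorm f ∞ volume * amalInf g := by
        gcongr
        exact lintegral_enorm_sub_zcast_le_amalInf hg j

lemma tsum_enorm_integral_mul_sub_zcast_rpow_le {f g : Rd d → ℂ} (hf : Measurable f)
    (hg : Measurable g) {r : ℝ} (hr : 1 ≤ r) :
    ∑' j : Zd d, ‖∫ x, f x * g (x - zcast j)‖ₑ ^ r ≤ amalInf g ^ r * ∫⁻ x, ‖f x‖ₑ ^ r := by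
  set A := amalInf g
  have hG (j : Zd d) : Measurable fun x => ‖g (x - zcast j)‖ₑ :=
    (hg.comp (measurable_sub_const _)).enorm
  have hterm (j : Zd d) : ‖∫ x, f x * g (x - zcast j)‖ₑ ^ r
      ≤ A ^ (r - 1) * ∫⁻ x, ‖f x‖ₑ ^ r * ‖g (x - zcast j)‖ₑ :=
    calc ‖∫ x, f x * g (x - zcast j)‖ₑ ^ r
        ≤ (∫⁻ x, ‖f x‖ₑ * ‖g (x - zcast j)‖ₑ) ^ r := by
          gcongr; exact enorm_integral_mul_le_lintegral _ _
      _ ≤ (∫⁻ x, ‖g (x - zcast j)‖ₑ) ^ (r - 1) * ∫⁻ x, ‖f x‖ₑ ^ r * ‖g (x - zcast j)‖ₑ :=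
          rpow_lintegral_mul_le_lintegral_rpow_mul hf.enorm.aemeasurable (hG j).aemeasurable hr
      _ ≤ A ^ (r - 1) * ∫⁻ x, ‖f x‖ₑ ^ r * ‖g (x - zcast j)‖ₑ := by
          gcongr
          exact lintegral_enorm_sub_zcast_le_amalInf hg j
  have hFr : Measurable fun x => ‖f x‖ₑ ^ r := hf.enorm.pow_const r
  calc ∑' j : Zd d, ‖∫ x, f x * g (x - zcast j)‖ₑ ^ r
      ≤ ∑' j : Zd d, A ^ (r - 1) * ∫⁻ x, ‖f x‖ₑ ^ r * ‖g (x - zcast j)‖ₑ :=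
        ENNReal.tsum_le_tsum hterm
    _ = A ^ (r - 1) * ∫⁻ x, ‖f x‖ₑ ^ r * periodization (fun x => ‖g x‖ₑ) x := by
        rw [ENNReal.tsum_mul_left,
          ← lintegral_tsum (f := fun j x => ‖f x‖ₑ ^ r * ‖g (x - zcast j)‖ₑ)
            fun j => (hFr.mul (hG j)).aemeasurable]
        simp_rw [ENNReal.tsum_mul_left, tsum_sub_zcast_eq_periodization fun y => ‖g y‖ₑ]
    _ ≤ A ^ (r - 1) * ∫⁻ x, ‖f x‖ₑ ^ r * A := by
        gcongr A ^ (r - 1) * ?_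
        refine lintegral_mono_ae ?_
        filter_upwards [ae_periodization_le_amalInf hg] with x hx
        gcongr
    _ = A ^ r * ∫⁻ x, ‖f x‖ₑ ^ r := by
        have hA : A ^ (r - 1) * A = A ^ r := by
          simpa using (ENNReal.rpow_add_of_nonneg (x := A) (r - 1) 1 (by linarith) zero_le_one).symm
        rw [lintegral_mul_const _ hFr, ← mul_assoc, mul_right_comm, hA]

end Lattice

theorem stmt19_general {d : ℕ} (p : ℝ≥0∞) (hp : 1 ≤ p)
    (f g : Rd d → ℂ) (hf : Measurable f) (hg : Measurable g) :
    dnorm p (fun j : Zd d => (‖∫ x : Rd d, f x * g (x - zcast j)‖₊ : ℝ≥0∞))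
      ≤ eLpNorm f p volume * amalInf g := by
  simp only [dnorm, ← enorm_eq_nnnorm]
  rcases eq_or_ne p ∞ with rfl | hp_top
  · exact iSup_le (enorm_integral_mul_sub_zcast_le_eLpNorm_top f hg)
  have hr : 1 ≤ p.toReal := by simpa using ENNReal.toReal_mono hp_top hp
  have hr0 : 0 < p.toReal := zero_lt_one.trans_le hr
  rw [if_neg hp_top, eLpNorm_eq_lintegral_rpow_enorm_toReal (zero_lt_one.trans_le hp).ne' hp_top]
  calc (∑' j : Zd d, ‖∫ x, f x * g (x - zcast j)‖ₑ ^ p.toReal) ^ (1 / p.toReal)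
      ≤ (amalInf g ^ p.toReal * ∫⁻ x, ‖f x‖ₑ ^ p.toReal) ^ (1 / p.toReal) := by
        gcongr
        exact tsum_enorm_integral_mul_sub_zcast_rpow_le hf hg hr
    _ = (∫⁻ x, ‖f x‖ₑ ^ p.toReal) ^ (1 / p.toReal) * amalInf g := by
        rw [ENNReal.mul_rpow_of_nonneg _ _ (by positivity), ← ENNReal.rpow_mul,
          mul_one_div_cancel hr0.ne', ENNReal.rpow_one, mul_comm]

/-- Lemma 2.5 (Aldroubi–Sun–Tang): `‖(∫ f(x) g(x−j) dx)_j‖_{ℓ^p} ≤ ‖f‖_{L^p} ‖g‖_{𝓛^∞}`. -/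
theorem stmt19 {d : ℕ} (p : ℝ≥0∞) (hp : 1 ≤ p)
    (f g : Rd d → ℂ) (hf : Measurable f) (hg : Measurable g)
    (hfp : eLpNorm f p volume ≠ ∞) (hgA : amalInf g ≠ ∞) :
    dnorm p (fun j : Zd d => (‖∫ x : Rd d, f x * g (x - zcast j)‖₊ : ℝ≥0∞))
      ≤ eLpNorm f p volume * amalInf g :=
  stmt19_general p hp f g hf hg
end
end
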